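/- arXiv:1812.04468 — 2 statements merged into one kernel-verified Lean document; each statement's English description precedes it below -/
import Mathlib

section
/- Let M be a first-order structure, A a set of parameters, v a finite tuple from M, and H a set of automorphisms of M fixing A pointwise. If the orbit set H·v = { h(v) : h ∈ H } is a definable subset over a parameter set B, and X ⊆ M^k is definable over the parameters v, then the union H(X) = ⋃_{h ∈ H} h(X) is a definable subset of M^k over B. -/
open FirstOrder Set

theorem definability_of_union_of_orbit_images
    {L : FirstOrder.Language} {M : Type*} [L.Structure M]
    (A B : Set M) {n k : ℕ} (v : Fin n → M)
    (H : Set (M ≃[L] M)) (hH : ∀ h ∈ H, ∀ a ∈ A, h a = a)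
    (horb : B.Definable L {w : Fin n → M | ∃ h ∈ H, w = fun i => h (v i)})
    (X : Set (Fin k → M)) (hX : (Set.range v).Definable L X) :
    B.Definable L (⋃ h ∈ H, (fun x : Fin k → M => fun i => h (x i)) '' X) := by
  classical
  obtain ⟨φ, hφ⟩ := Set.definable_iff_exists_formula_sum.1 hX
  -- pick preimage indices for parameters in range v
  set f : (Set.range v) → Fin n := fun a => a.2.choose with hfdef
  have hf : ∀ a : (Set.range v), v (f a) = ↑a := fun a => a.2.choose_spec
  set ψ : L.Formula (Fin n ⊕ Fin k) := φ.relabel (Sum.map f id) with hψdef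
  have hψ : ∀ (w : Fin n → M) (x : Fin k → M),
      ψ.Realize (Sum.elim w x) ↔ φ.Realize (Sum.elim (w ∘ f) x) := by
    intro w x
    rw [hψdef, Language.Formula.realize_relabel, Sum.elim_comp_map, Function.comp_id]
  have hXψ : ∀ x : Fin k → M, x ∈ X ↔ ψ.Realize (Sum.elim v x) := by
    intro x
    rw [hψ]
    have : v ∘ f = fun a : (Set.range v) => (a : M) := funext fun a => hf a
    rw [this, hφ]
    rfl
  -- invariance of ψ under automorphisms
  have hinv : ∀ (h : M ≃[L] M) (u : Fin n ⊕ Fin k → M),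
      ψ.Realize (fun i => h (u i)) ↔ ψ.Realize u := by
    intro h u
    exact Language.StrongHomClass.realize_formula h ψ (v := u)
  -- assemble the definable set
  have hO : B.Definable L ((fun g : Fin n ⊕ Fin k → M => g ∘ Sum.inl) ⁻¹'
      {w : Fin n → M | ∃ h ∈ H, w = fun i => h (v i)}) :=
    horb.preimage_comp Sum.inl
  have hΨ : B.Definable L {g : Fin n ⊕ Fin k → M | ψ.Realize g} :=
    (Set.empty_definable_iff.2 ⟨ψ, rfl⟩).mono (empty_subset B)
  have hS := (hO.inter hΨ).image_comp (Sum.inr : Fin k → Fin n ⊕ Fin k)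
  convert hS using 1
  ext x
  simp only [mem_iUnion, mem_image, mem_inter_iff, mem_preimage, mem_setOf_eq]
  constructor
  · rintro ⟨h, hh, y, hy, rfl⟩
    refine ⟨Sum.elim (fun i => h (v i)) (fun i => h (y i)), ⟨⟨h, hh, ?_⟩, ?_⟩, ?_⟩
    · ext i; rfl
    · have : Sum.elim (fun i => h (v i)) (fun i => h (y i))
          = fun j => h (Sum.elim v y j) := by ext j; cases j <;> rfl
      rw [this, hinv]
      exact (hXψ y).1 hy
    · ext i; rfl
  · rintro ⟨g, ⟨⟨h, hh, hg1⟩, hg2⟩, rfl⟩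
    refine ⟨h, hh, fun i => h.symm (g (Sum.inr i)), ?_, ?_⟩
    · rw [hXψ]
      have : Sum.elim v (fun i => h.symm (g (Sum.inr i)))
          = fun j => h.symm (g j) := by
        ext j
        cases j with
        | inl i =>
          have := congrFun hg1 i
          simp only [Function.comp_apply] at this
          simp [this]
        | inr i => rfl
      rw [this, hinv h.symm]
      exact hg2
    · ext i; simp
end

section
/- Let M be a first-order structure, A a parameter set, v a finite tuple from M, and H₁, H₂ ⊆ Aut_A(M) sets of automorphisms fixing A pointwise. If both orbit sets H₁·v and H₂·v are definable over v, then the set (H₁ ∘ H₂)·v = { h₁(h₂(v)) : h₁ ∈ H₁, h₂ ∈ H₂ } is definable over v. -/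
open FirstOrder Set

/-
A set definable over the entries of `v` is cut out by a formula `φ(x, v)`, and an automorphism
`h` carries it to the set cut out by `φ(x, h v)`. Hence `⋃_{h ∈ H} h(S)` is defined by
`∃ y, y ∈ H·v ∧ φ(x, y)`, which is definable over `v` as soon as the orbit `H·v` is; take
`S = H₂·v` and `H = H₁`.
-/

namespace FirstOrder.Language

variable {L : Language} {M : Type*} [L.Structure M] {α β : Type*}

theorem Formula.realize_sum_elim_comp_equiv (φ : L.Formula (α ⊕ β)) (h : M ≃[L] M)
    (w : α → M) (v : β → M) :
    φ.Realize (Sum.elim (h ∘ w) (h ∘ v)) ↔ φ.Realize (Sum.elim w v) := by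
  rw [← Sum.comp_elim, StrongHomClass.realize_formula]

theorem exists_formula_of_definable_range {v : β → M} {s : Set (α → M)}
    (hs : (range v).Definable L s) :
    ∃ φ : L.Formula (α ⊕ β), ∀ w, w ∈ s ↔ φ.Realize (Sum.elim w v) := by
  obtain ⟨φ, rfl⟩ := definable_iff_exists_formula_sum.mp hs
  refine ⟨φ.relabel (Sum.elim (Sum.inr ∘ rangeSplitting v) Sum.inl), fun w => ?_⟩
  have hparams : Sum.elim w v ∘ Sum.elim (Sum.inr ∘ rangeSplitting v) Sum.inl =
      Sum.elim ((↑) : range v → M) w := by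
    ext (a | i)
    · exact apply_rangeSplitting v a
    · rfl
  rw [Formula.realize_relabel, hparams, mem_ofPred_eq]

theorem image_automorphism_iff_realize {v : β → M} {s : Set (α → M)} {φ : L.Formula (α ⊕ β)}
    (hφ : ∀ w, w ∈ s ↔ φ.Realize (Sum.elim w v)) (h : M ≃[L] M) (w : α → M) :
    (∃ u ∈ s, w = h ∘ u) ↔ φ.Realize (Sum.elim w (h ∘ v)) := by
  constructor
  · rintro ⟨u, hu, rfl⟩
    rwa [Formula.realize_sum_elim_comp_equiv, ← hφ]
  · intro hw
    have hw' : h ∘ (h.symm ∘ w) = w := funext fun i => h.apply_symm_apply (w i)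
    refine ⟨h.symm ∘ w, ?_, hw'.symm⟩
    rwa [hφ, ← Formula.realize_sum_elim_comp_equiv φ h, hw']

theorem definable_iUnion_image_of_definable_orbit [Finite β] {v : β → M} {s : Set (α → M)}
    {H : Set (M ≃[L] M)} (hH : (range v).Definable L {u | ∃ h ∈ H, u = h ∘ v})
    (hs : (range v).Definable L s) :
    (range v).Definable L {w | ∃ h ∈ H, ∃ u ∈ s, w = h ∘ u} := by
  obtain ⟨φ, hφ⟩ := exists_formula_of_definable_range hs
  have hφ_definable : (range v).Definable L {g : α ⊕ β → M | φ.Realize g} :=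
    (empty_definable_iff.mpr ⟨φ, rfl⟩).mono (empty_subset _)
  convert ((hH.preimage_comp Sum.inr).inter hφ_definable).exists_of_finite using 1
  ext w
  simp only [image_automorphism_iff_realize hφ, mem_ofPred_eq, mem_inter_iff, mem_preimage,
    Sum.elim_comp_inr]
  constructor
  · rintro ⟨h, hh, hw⟩
    exact ⟨h ∘ v, ⟨h, hh, rfl⟩, hw⟩
  · rintro ⟨_, ⟨h, hh, rfl⟩, hw⟩
    exact ⟨h, hh, hw⟩

end FirstOrder.Language

theorem definability_of_composition_orbit_general
    {L : FirstOrder.Language} {M : Type*} [L.Structure M]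
    {n : ℕ} (v : Fin n → M)
    (H₁ H₂ : Set (M ≃[L] M))
    (horb₁ : (Set.range v).Definable L {w : Fin n → M | ∃ h ∈ H₁, w = fun i => h (v i)})
    (horb₂ : (Set.range v).Definable L {w : Fin n → M | ∃ h ∈ H₂, w = fun i => h (v i)}) :
    (Set.range v).Definable L
      {w : Fin n → M | ∃ h₁ ∈ H₁, ∃ h₂ ∈ H₂, w = fun i => h₁ (h₂ (v i))} := by
  convert Language.definable_iUnion_image_of_definable_orbit horb₁ horb₂ using 1
  ext w
  constructor
  · rintro ⟨h₁, hh₁, h₂, hh₂, rfl⟩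
    exact ⟨h₁, hh₁, _, ⟨h₂, hh₂, rfl⟩, rfl⟩
  · rintro ⟨h₁, hh₁, _, ⟨h₂, hh₂, rfl⟩, rfl⟩
    exact ⟨h₁, hh₁, h₂, hh₂, rfl⟩

theorem definability_of_composition_orbit
    {L : FirstOrder.Language} {M : Type*} [L.Structure M]
    (A : Set M) {n : ℕ} (v : Fin n → M)
    (H₁ H₂ : Set (M ≃[L] M))
    (hH₁ : ∀ h ∈ H₁, ∀ a ∈ A, h a = a) (hH₂ : ∀ h ∈ H₂, ∀ a ∈ A, h a = a)
    (horb₁ : (Set.range v).Definable L {w : Fin n → M | ∃ h ∈ H₁, w = fun i => h (v i)})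
    (horb₂ : (Set.range v).Definable L {w : Fin n → M | ∃ h ∈ H₂, w = fun i => h (v i)}) :
    (Set.range v).Definable L
      {w : Fin n → M | ∃ h₁ ∈ H₁, ∃ h₂ ∈ H₂, w = fun i => h₁ (h₂ (v i))} :=
  definability_of_composition_orbit_general v H₁ H₂ horb₁ horb₂
end
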